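/- For every β ∈ ℂ, the map φ(x,y) = (x/(1+βy), y/(1+βy)) preserves the foliation F₅ defined by ω₅ = x²dy + y²(x dy − y dx): on the open set 1+βy ≠ 0, φ*ω₅ = (1+βy)^{-4}·ω₅. -/

import Mathlib

/-! With `u = 1 + βy`, the partial derivatives of `φ` are `∂ₓφ = (1/u, 0)` and
`∂ᵧφ = (-βx/u², 1/u²)`. Substituting them, both coefficients of `φ*ω₅` become
rational functions with denominator a power of `u`; after clearing denominators the
`dx` coefficient is immediate and the `dy` coefficient uses only `βy = u - 1`. -/

section

variable {𝕜 : Type*} [NontriviallyNormedField 𝕜]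

theorem hasDerivAt_one_add_mul (β y : 𝕜) :
    HasDerivAt (fun t => 1 + β * t) β y := by
  simpa using ((hasDerivAt_id' y).const_mul β).const_add 1

theorem hasDerivAt_const_div_one_add_mul (c β y : 𝕜) (hy : 1 + β * y ≠ 0) :
    HasDerivAt (fun t => c / (1 + β * t)) (-(c * β) / (1 + β * y) ^ 2) y :=
  ((hasDerivAt_const y c).fun_div (hasDerivAt_one_add_mul β y) hy).congr_deriv (by ring)

theorem hasDerivAt_div_one_add_mul (β y : 𝕜) (hy : 1 + β * y ≠ 0) :
    HasDerivAt (fun t => t / (1 + β * t)) (1 / (1 + β * y) ^ 2) y :=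
  ((hasDerivAt_id' y).fun_div (hasDerivAt_one_add_mul β y) hy).congr_deriv (by ring)

end

/-- For β ∈ ℂ, the map φ(x,y) = (x/(1+βy), y/(1+βy)) preserves the foliation of
ω₅ = −y³dx + (x²+xy²)dy : on 1+βy ≠ 0, φ*ω₅ = (1+βy)⁻⁴·ω₅, componentwise. -/
theorem isotropy_omega5_birational (β : ℂ) :
    ∀ x y : ℂ, 1 + β*y ≠ 0 →
      ((-(y/(1+β*y))^3) * deriv (fun x' : ℂ => x'/(1+β*y)) x
          + ((x/(1+β*y))^2 + (x/(1+β*y)) * (y/(1+β*y))^2) *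
              deriv (fun x' : ℂ => y/(1+β*y)) x
        = (1+β*y)^(-4 : ℤ) * (-(y^3))) ∧
      ((-(y/(1+β*y))^3) * deriv (fun y' : ℂ => x/(1+β*y')) y
          + ((x/(1+β*y))^2 + (x/(1+β*y)) * (y/(1+β*y))^2) *
              deriv (fun y' : ℂ => y'/(1+β*y')) y
        = (1+β*y)^(-4 : ℤ) * (x^2 + x*y^2)) := by
  intro x y hy
  rw [deriv_div_const, deriv_id'', deriv_const, (hasDerivAt_const_div_one_add_mul x β y hy).deriv,
    (hasDerivAt_div_one_add_mul β y hy).deriv, zpow_neg, zpow_ofNat, inv_mul_eq_div]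
  generalize hu : 1 + β * y = u at hy ⊢
  constructor
  · rw [mul_zero, add_zero]
    field_simp
  · field_simp
    rw [← hu]
    ring
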